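/- arXiv:1311.5642 — 2 statements merged into one kernel-verified Lean document; each statement's English description precedes it below -/
import Mathlib

section
/- For h ≥ 2, the configuration space F_h^i(k,n) is nonempty if and only if k + 1 ≤ i ≤ min(hk, n). -/
/-!
Two distinct `k`-dimensional subspaces together span more than `k` dimensions, and `h` of them
span at most `hk`. Conversely, a space `U` of dimension `i` with `k < i ≤ hk` is the sum of `h`
distinct `k`-dimensional subspaces, by induction on `h ≥ 2`. If `i ≤ (h - 1)k`, add to a family
of `h - 1` subspaces for `U` a `k`-dimensional subspace of `U` through a vector lying in none of
them; it exists because over an infinite field a space is not a finite union of proper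
subspaces. Otherwise write `U = C ⊕ U'` with `dim C = k` and add `C` to a family for `U'`.
-/

/-- The `i`-th ordered configuration space `F_h^i(k,n)`: `h`-tuples of pairwise
distinct `k`-dimensional subspaces of `ℂ^n` whose sum has dimension `i`. -/
def GrassConfig (n k h i : ℕ) : Set (Fin h → Submodule ℂ (Fin n → ℂ)) :=
  {f | Function.Injective f ∧ (∀ j, Module.finrank ℂ (f j) = k) ∧
    Module.finrank ℂ ↥(⨆ j, f j) = i}

open Module Submodule

theorem Fin.iSup_cons {α : Type*} [CompleteLattice α] {h : ℕ} (a : α) (f : Fin h → α) :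
    ⨆ j, (Fin.cons a f : Fin (h + 1) → α) j = a ⊔ ⨆ j, f j := by
  simp only [iSup, Fin.range_cons, sSup_insert]

theorem Fin.cons_injective_of_forall_not_le {α : Type*} [Preorder α] {h : ℕ} {a : α}
    {f : Fin h → α} (hf : Function.Injective f) (ha : ∀ j, ¬ a ≤ f j) :
    Function.Injective (Fin.cons a f : Fin (h + 1) → α) :=
  Fin.cons_injective_iff.mpr ⟨by rintro ⟨j, rfl⟩; exact ha j le_rfl, hf⟩

namespace Submodule

variable {K V : Type*} [Field K] [AddCommGroup V] [Module K V]

theorem exists_mem_forall_notMem_of_forall_not_le [Infinite K] {ι : Type*} [Finite ι]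
    {U : Submodule K V} {f : ι → Submodule K V} (hf : ∀ j, ¬ U ≤ f j) :
    ∃ x ∈ U, ∀ j, x ∉ f j := by
  obtain ⟨⟨x, hxU⟩, hx⟩ := exists_forall_notMem_of_forall_ne_top
    (fun j => (f j).comap U.subtype) fun j => comap_subtype_eq_top.not.mpr (hf j)
  exact ⟨x, hxU, hx⟩

variable [FiniteDimensional K V]

theorem exists_le_le_finrank_eq {p q : Submodule K V} (hpq : p ≤ q) {d : ℕ}
    (hpd : finrank K p ≤ d) (hdq : d ≤ finrank K q) :
    ∃ r : Submodule K V, p ≤ r ∧ r ≤ q ∧ finrank K r = d := by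
  induction d, hpd using Nat.le_induction with
  | base => exact ⟨p, le_rfl, hpq, rfl⟩
  | succ d _ ih =>
    obtain ⟨r, hpr, hrq, hr⟩ := ih (by omega)
    obtain ⟨x, hxq, hxr⟩ := SetLike.exists_of_lt (lt_of_le_of_ne hrq (by rintro rfl; omega))
    exact ⟨r ⊔ span K {x}, le_sup_of_le_left hpr,
      sup_le hrq ((span_singleton_le_iff_mem _ _).mpr hxq),
      by rw [finrank_sup_span_singleton hxr, hr]⟩

theorem exists_finrank_eq {d : ℕ} (hd : d ≤ finrank K V) :
    ∃ U : Submodule K V, finrank K U = d := by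
  obtain ⟨U, -, -, hU⟩ := exists_le_le_finrank_eq (bot_le : ⊥ ≤ (⊤ : Submodule K V)) (by simp)
    (hd.trans_eq (by simp))
  exact ⟨U, hU⟩

theorem exists_disjoint_sup_eq_finrank_eq {U : Submodule K V} {k : ℕ} (hk : k ≤ finrank K U) :
    ∃ C U' : Submodule K V, Disjoint C U' ∧ C ⊔ U' = U ∧ finrank K C = k ∧
      finrank K U' = finrank K U - k := by
  obtain ⟨C, -, hCU, hC⟩ := exists_le_le_finrank_eq bot_le (by simp) hk
  obtain ⟨U', hdisj, hsup⟩ := IsModularLattice.exists_disjoint_and_sup_eq hCU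
  refine ⟨C, U', hdisj, hsup, hC, ?_⟩
  have := finrank_sup_add_finrank_inf_eq C U'
  rw [hsup, hdisj.eq_bot, finrank_bot, hC] at this
  omega

theorem exists_le_finrank_eq_forall_not_le [Infinite K] {ι : Type*} [Finite ι]
    {U : Submodule K V} {f : ι → Submodule K V} {k : ℕ} (hk : 0 < k) (hkU : k ≤ finrank K U)
    (hf : ∀ j, ¬ U ≤ f j) : ∃ W ≤ U, finrank K W = k ∧ ∀ j, ¬ W ≤ f j := by
  obtain ⟨x, hxU, hx⟩ := exists_mem_forall_notMem_of_forall_not_le hf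
  obtain ⟨W, hxW, hWU, hW⟩ := exists_le_le_finrank_eq ((span_singleton_le_iff_mem x U).mpr hxU)
    (((finrank_span_le_card ({x} : Set V)).trans_eq (by simp)).trans hk) hkU
  exact ⟨W, hWU, hW, fun j hWf => hx j (hWf ((span_singleton_le_iff_mem _ _).mp hxW))⟩

theorem finrank_lt_finrank_sup_of_ne {p q : Submodule K V} (hpq : p ≠ q)
    (hrank : finrank K p ≤ finrank K q) : finrank K p < finrank K ↥(p ⊔ q) :=
  finrank_lt_finrank_of_lt <| lt_of_le_of_ne le_sup_left fun h =>
    hpq (eq_of_le_of_finrank_le (h ▸ le_sup_right) hrank).symm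

theorem finrank_iSup_le_mul {h k : ℕ} (f : Fin h → Submodule K V)
    (hf : ∀ j, finrank K (f j) ≤ k) : finrank K ↥(⨆ j, f j) ≤ h * k := by
  induction h with
  | zero => simp
  | succ h ih =>
    rw [← Fin.cons_self_tail f, Fin.iSup_cons]
    calc _ ≤ finrank K (f 0) + finrank K ↥(⨆ j, Fin.tail f j) :=
          finrank_add_le_finrank_add_finrank _ _
      _ ≤ k + h * k := add_le_add (hf 0) (ih _ fun j => hf _)
      _ = (h + 1) * k := by ring

theorem exists_not_le_sup_eq_of_finrank_le_two_mul {U : Submodule K V} {k : ℕ}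
    (hkU : k < finrank K U) (hUk : finrank K U ≤ 2 * k) :
    ∃ C D : Submodule K V, finrank K C = k ∧ finrank K D = k ∧ ¬ C ≤ D ∧ C ⊔ D = U := by
  obtain ⟨C, U', -, hsup, hC, hU'⟩ := exists_disjoint_sup_eq_finrank_eq hkU.le
  obtain ⟨D, hU'D, hDU, hD⟩ :=
    exists_le_le_finrank_eq (hsup ▸ le_sup_right) (by omega) (hkU.le : k ≤ _)
  have hCD : C ⊔ D = U :=
    le_antisymm (sup_le (hsup ▸ le_sup_left) hDU) (hsup ▸ sup_le_sup_left hU'D C)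
  refine ⟨C, D, hC, hD, fun hle => ?_, hCD⟩
  rw [sup_eq_right.mpr hle] at hCD
  subst hCD
  omega

theorem exists_injective_finrank_eq_iSup_eq [Infinite K] {k h : ℕ} (hh : 2 ≤ h)
    {U : Submodule K V} (hkU : k < finrank K U) (hUh : finrank K U ≤ h * k) :
    ∃ f : Fin h → Submodule K V,
      Function.Injective f ∧ (∀ j, finrank K (f j) = k) ∧ ⨆ j, f j = U := by
  induction h, hh using Nat.le_induction generalizing U with
  | base =>
    obtain ⟨C, D, hC, hD, hCD, hsup⟩ := exists_not_le_sup_eq_of_finrank_le_two_mul hkU hUh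
    refine ⟨Fin.cons C fun _ => D, Fin.cons_injective_of_forall_not_le
      (Function.injective_of_subsingleton _) fun _ => hCD, Fin.cases hC fun _ => hD, ?_⟩
    rw [Fin.iSup_cons, iSup_const, hsup]
  | succ h hh ih =>
    have hk : 0 < k := Nat.pos_of_ne_zero fun hk => by
      rw [hk, mul_zero] at hUh
      omega
    by_cases hUh' : finrank K U ≤ h * k
    · obtain ⟨f, hf, hfk, hfU⟩ := ih hkU hUh'
      obtain ⟨W, hWU, hW, hWf⟩ := exists_le_finrank_eq_forall_not_le (f := f) hk hkU.le
        fun j hUf => by have := finrank_mono hUf; rw [hfk] at this; omega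
      refine ⟨Fin.cons W f, Fin.cons_injective_of_forall_not_le hf hWf, Fin.cases hW hfk, ?_⟩
      rw [Fin.iSup_cons, hfU, sup_eq_right.mpr hWU]
    · obtain ⟨C, U', hdisj, hsup, hC, hU'⟩ := exists_disjoint_sup_eq_finrank_eq hkU.le
      have h2k : 2 * k ≤ h * k := Nat.mul_le_mul_right k hh
      have hsucc : (h + 1) * k = h * k + k := by ring
      obtain ⟨f, hf, hfk, hfU'⟩ := ih (U := U') (by omega) (by omega)
      have hCU' : ¬ C ≤ U' := fun hle => by
        rw [disjoint_of_le_iff_left_eq_bot hle |>.mp hdisj, finrank_bot] at hC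
        omega
      refine ⟨Fin.cons C f, Fin.cons_injective_of_forall_not_le hf
        fun j hle => hCU' (hle.trans (hfU' ▸ le_iSup f j)), Fin.cases hC hfk, ?_⟩
      rw [Fin.iSup_cons, hfU', hsup]

end Submodule

theorem grassConfig_nonempty_iff_general (n k h i : ℕ) (hh : 2 ≤ h) :
    (GrassConfig n k h i).Nonempty ↔ k + 1 ≤ i ∧ i ≤ min (h * k) n := by
  constructor
  · rintro ⟨f, hf, hfk, rfl⟩
    have h01 : f ⟨0, by omega⟩ ≠ f ⟨1, by omega⟩ := hf.ne (by simp [Fin.ext_iff])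
    have hlt := finrank_lt_finrank_sup_of_ne h01 (by rw [hfk, hfk])
    rw [hfk] at hlt
    refine ⟨hlt.trans_le (finrank_mono (sup_le (le_iSup f _) (le_iSup f _))),
      le_min (finrank_iSup_le_mul f fun j => (hfk j).le) ?_⟩
    simpa using finrank_le (⨆ j, f j)
  · rintro ⟨hki, hi⟩
    obtain ⟨hih, hin⟩ := le_min_iff.mp hi
    obtain ⟨U, hU⟩ := exists_finrank_eq (K := ℂ) (V := Fin n → ℂ) (hin.trans_eq (by simp))
    obtain ⟨f, hf, hfk, hfU⟩ := exists_injective_finrank_eq_iSup_eq hh (hU ▸ hki) (hU ▸ hih)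
    exact ⟨f, hf, hfk, by rw [hfU, hU]⟩

/-- For `h ≥ 2`, the configuration space `F_h^i(k,n)` is nonempty if and only if
`k + 1 ≤ i ≤ min(hk, n)`. -/
theorem grassConfig_nonempty_iff (n k h i : ℕ) (hk : 0 < k) (hkn : k < n) (hh : 2 ≤ h) :
    (GrassConfig n k h i).Nonempty ↔ k + 1 ≤ i ∧ i ≤ min (h * k) n :=
  grassConfig_nonempty_iff_general n k h i hh
end

section
/- For h ≥ 2, the adjacency of strata holds: the closure of F_h^i(k,n) in F_h(Gr(k,n)) equals the disjoint union of F_h^j(k,n) for 2 ≤ j ≤ i; in particular, every point of F_h^{i-1}(k,n) is a limit of points of F_h^i(k,n) whenever both strata are nonempty. -/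
/-- The natural topology on the set of subspaces of `ℂ^n`, induced by sending a
subspace to the orthogonal projection onto it. -/
noncomputable instance grassTop (n : ℕ) :
    TopologicalSpace (Submodule ℂ (EuclideanSpace ℂ (Fin n))) :=
  TopologicalSpace.induced
    (fun K => (K.subtypeL.comp K.orthogonalProjection :
      EuclideanSpace ℂ (Fin n) →L[ℂ] EuclideanSpace ℂ (Fin n))) inferInstance

/-- The ordered configuration space `F_h(Gr(k,n))` of `h` distinct points of the
Grassmannian `Gr(k,n)`, with its natural topology. -/
def GrassTuple (n k h : ℕ) :=
  {f : Fin h → Submodule ℂ (EuclideanSpace ℂ (Fin n)) //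
    Function.Injective f ∧ ∀ j, Module.finrank ℂ (f j) = k}

noncomputable instance (n k h : ℕ) : TopologicalSpace (GrassTuple n k h) :=
  instTopologicalSpaceSubtype

/-- The dimension of the sum of the subspaces of a configuration. -/
noncomputable def sumDim {n k h : ℕ} (x : GrassTuple n k h) : ℕ :=
  Module.finrank ℂ ↥(⨆ j, x.1 j)

/-!
The sum dimension is lower semicontinuous: it is the rank of the sum of the orthogonal
projections onto the `x j`, a continuous function of the configuration, and rank can only jump
up in the limit. This bounds the closure
of the `i`-th stratum from above; the lower bound `2 ≤ k + 1 ≤ sumDim` holds for any two distinct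
`k`-subspaces.

Conversely, a configuration `x` whose sum `V` has dimension `< min(hk, n)` is a limit of
configurations with sum of dimension one larger. Since `dim V < hk`, the subspaces are not
independent, so some `x a` contains a vector `u ≠ 0` lying in the sum of the others; pick
`w ≠ 0` orthogonal to `V`. Tilting the line `ℂ u` of `x a` to `ℂ (u + t w)` keeps the dimension
of `x a` and, for `t ≠ 0`, adds exactly `w` to the sum, because `u` is still spanned by the
other members. Iterating gives every point of lower sum dimension.
-/

open Module Submodule Filter Topology Function

theorem iSupIndep.finrank_iSup {K V ι : Type*} [DivisionRing K] [AddCommGroup V] [Module K V]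
    [FiniteDimensional K V] [Fintype ι] {p : ι → Submodule K V} (hp : iSupIndep p) :
    finrank K ↥(⨆ i, p i) = ∑ i, finrank K (p i) := by
  classical
  rw [iSup_eq_range_dfinsupp_lsum, LinearMap.finrank_range_of_inj hp.dfinsupp_lsum_injective]
  exact finrank_directSum K fun i => p i

theorem Function.Injective.update_of_forall_ne {ι α : Type*} [DecidableEq ι] {f : ι → α}
    (hf : Injective f) {a : ι} {x : α} (hx : ∀ b ≠ a, x ≠ f b) : Injective (update f a x) := by
  intro c d hcd
  by_cases hc : c = a <;> by_cases hd : d = a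
  · exact hc.trans hd.symm
  · simp only [hc, update_self, update_of_ne hd] at hcd
    exact absurd hcd (hx d hd)
  · simp only [hd, update_self, update_of_ne hc] at hcd
    exact absurd hcd.symm (hx c hc)
  · simpa only [update_of_ne hc, update_of_ne hd, hf.eq_iff] using hcd

namespace Submodule

variable {𝕜 E : Type*} [RCLike 𝕜] [NormedAddCommGroup E] [InnerProductSpace 𝕜 E]

theorem starProjection_span_singleton_eq_smul_rankOne (v : E) :
    (𝕜 ∙ v).starProjection = ((‖v‖ ^ 2 : ℝ) : 𝕜)⁻¹ • InnerProductSpace.rankOne 𝕜 v v := by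
  ext x
  simp [starProjection_singleton, div_eq_inv_mul, mul_smul]

theorem continuousAt_starProjection_span_singleton {v : E} (hv : v ≠ 0) :
    ContinuousAt (fun v : E => (𝕜 ∙ v).starProjection) v := by
  simp_rw [starProjection_span_singleton_eq_smul_rankOne]
  have hv2 : ((‖v‖ ^ 2 : ℝ) : 𝕜) ≠ 0 := by simpa using hv
  have hrk : Continuous fun v : E => InnerProductSpace.rankOne 𝕜 v v := by
    simp_rw [InnerProductSpace.rankOne_def]
    fun_prop
  exact ((RCLike.continuous_ofReal.comp (continuous_norm.pow 2)).continuousAt.inv₀ hv2).smul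
    hrk.continuousAt

noncomputable def tilt (K : Submodule 𝕜 E) (u w : E) (t : 𝕜) : Submodule 𝕜 E :=
  (𝕜 ∙ (u + t • w)) ⊔ ((𝕜 ∙ u)ᗮ ⊓ K)

variable {K : Submodule 𝕜 E} {u w : E}

theorem add_smul_mem_tilt (t : 𝕜) : u + t • w ∈ K.tilt u w t :=
  mem_sup_left (mem_span_singleton_self _)

theorem tilt_zero (hu : u ∈ K) : K.tilt u w 0 = K := by
  simpa [tilt] using sup_orthogonal_inf_of_hasOrthogonalProjection
    ((span_singleton_le_iff_mem u K).2 hu)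

theorem add_smul_mem_orthogonal_inf (hw : w ∈ Kᗮ) (t : 𝕜) :
    u + t • w ∈ ((𝕜 ∙ u)ᗮ ⊓ K)ᗮ := by
  refine add_mem (orthogonal_le inf_le_left ?_) (smul_mem _ _ (orthogonal_le inf_le_right hw))
  rw [orthogonal_orthogonal]
  exact mem_span_singleton_self u

theorem add_smul_ne_zero (hu : u ∈ K) (hu0 : u ≠ 0) (hw : w ∈ Kᗮ) (t : 𝕜) : u + t • w ≠ 0 := by
  intro h
  have hu' : u ∈ Kᗮ := by
    rw [eq_neg_of_add_eq_zero_left h]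
    exact neg_mem (smul_mem _ _ hw)
  exact hu0 ((inf_orthogonal_eq_bot K).le ⟨hu, hu'⟩)

theorem tilt_sup_span_singleton (hu : u ∈ K) {t : 𝕜} (ht : t ≠ 0) :
    K.tilt u w t ⊔ (𝕜 ∙ u) = K ⊔ (𝕜 ∙ w) := by
  have hspan : (𝕜 ∙ (u + t • w)) ⊔ (𝕜 ∙ u) = (𝕜 ∙ u) ⊔ (𝕜 ∙ w) := by
    apply le_antisymm
    · refine sup_le ?_ le_sup_left
      rw [span_singleton_le_iff_mem]
      exact add_mem (mem_sup_left (mem_span_singleton_self u))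
        (mem_sup_right (smul_mem _ _ (mem_span_singleton_self w)))
    · refine sup_le le_sup_right ?_
      rw [span_singleton_le_iff_mem]
      have key := smul_mem _ t⁻¹ (sub_mem (mem_sup_left (mem_span_singleton_self (u + t • w)))
        (mem_sup_right (mem_span_singleton_self u)) : (u + t • w) - u ∈ (𝕜 ∙ (u + t • w)) ⊔ _)
      rwa [add_sub_cancel_left, smul_smul, inv_mul_cancel₀ ht, one_smul] at key
  rw [tilt, sup_right_comm, hspan, sup_right_comm,
    sup_orthogonal_inf_of_hasOrthogonalProjection ((span_singleton_le_iff_mem u K).2 hu)]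

theorem tilt_not_le {V : Submodule 𝕜 E} (hu : u ∈ V) (hw : w ∈ Vᗮ) (hw0 : w ≠ 0) {t : 𝕜}
    (ht : t ≠ 0) : ¬K.tilt u w t ≤ V := by
  intro hle
  have htw : t • w ∈ V := by simpa using sub_mem (hle (add_smul_mem_tilt t)) hu
  exact hw0 ((inf_orthogonal_eq_bot V).le ⟨(smul_mem_iff V ht).1 htw, hw⟩)

theorem iSup_update_tilt {ι : Type*} [DecidableEq ι] {f : ι → Submodule 𝕜 E} {a : ι}
    (hu : u ∈ f a) (hW : u ∈ ⨆ b, ⨆ (_ : b ≠ a), f b) {t : 𝕜} (ht : t ≠ 0) :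
    ⨆ j, update f a ((f a).tilt u w t) j = (⨆ j, f j) ⊔ (𝕜 ∙ w) := by
  have hrest : ⨆ b, ⨆ (_ : b ≠ a), update f a ((f a).tilt u w t) b = ⨆ b, ⨆ (_ : b ≠ a), f b :=
    iSup_congr fun b => iSup_congr fun hb => update_of_ne hb _ _
  have hW' : (𝕜 ∙ u) ⊔ ⨆ b, ⨆ (_ : b ≠ a), f b = ⨆ b, ⨆ (_ : b ≠ a), f b :=
    sup_eq_right.2 ((span_singleton_le_iff_mem _ _).2 hW)
  rw [iSup_split_single _ a, hrest, update_self, ← hW', ← sup_assoc,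
    tilt_sup_span_singleton hu ht, sup_right_comm, ← iSup_split_single f a]

variable [FiniteDimensional 𝕜 E]

theorem ker_sum_starProjection {ι : Type*} [Fintype ι] (f : ι → Submodule 𝕜 E) :
    LinearMap.ker ((∑ j, (f j).starProjection : E →L[𝕜] E) : E →ₗ[𝕜] E) = (⨆ j, f j)ᗮ := by
  ext v
  simp only [LinearMap.mem_ker, ← iInf_orthogonal, mem_iInf, ← starProjection_apply_eq_zero_iff]
  refine ⟨fun hv j => ?_, fun hv => by simp [hv]⟩
  have hsum : ∑ j, RCLike.re (inner 𝕜 ((f j).starProjection v) v) = 0 := by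
    simpa [← map_sum, ← sum_inner] using congrArg (fun w => RCLike.re (inner 𝕜 w v)) hv
  have hj := (Finset.sum_eq_zero_iff_of_nonneg fun j _ => re_inner_starProjection_nonneg _ v).1
    hsum j (Finset.mem_univ j)
  rw [re_inner_starProjection_eq_normSq, sq_eq_zero_iff, norm_eq_zero] at hj
  simp [starProjection_apply, hj]

theorem range_sum_starProjection {ι : Type*} [Fintype ι] (f : ι → Submodule 𝕜 E) :
    LinearMap.range ((∑ j, (f j).starProjection : E →L[𝕜] E) : E →ₗ[𝕜] E) = ⨆ j, f j := by
  have hT : ((∑ j, (f j).starProjection : E →L[𝕜] E) : E →ₗ[𝕜] E).IsSymmetric := by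
    rw [ContinuousLinearMap.toLinearMap_sum]
    exact LinearMap.isSymmetric_sum _ fun j _ => (f j).starProjection_isSymmetric
  rw [← orthogonal_orthogonal (LinearMap.range _), hT.orthogonal_range, ker_sum_starProjection,
    orthogonal_orthogonal]

theorem IsOrtho.starProjection_sup {U V : Submodule 𝕜 E} (hUV : U ⟂ V) :
    (U ⊔ V).starProjection = U.starProjection + V.starProjection := by
  ext x
  refine eq_starProjection_of_mem_orthogonal (u := x)
    (add_mem (mem_sup_left (U.starProjection_apply_mem x))
      (mem_sup_right (V.starProjection_apply_mem x))) ?_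
  rw [← inf_orthogonal, add_apply]
  refine ⟨?_, ?_⟩
  · rw [sub_add_eq_sub_sub]
    exact sub_mem (U.sub_starProjection_mem_orthogonal x)
      (hUV.symm.le (V.starProjection_apply_mem x))
  · rw [add_comm, sub_add_eq_sub_sub]
    exact sub_mem (V.sub_starProjection_mem_orthogonal x) (hUV.le (U.starProjection_apply_mem x))

theorem finrank_span_singleton_sup_of_mem_orthogonal {D : Submodule 𝕜 E} {v : E}
    (hv : v ≠ 0) (hvD : v ∈ Dᗮ) : finrank 𝕜 ↥((𝕜 ∙ v) ⊔ D) = finrank 𝕜 D + 1 := by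
  have hdisj : (𝕜 ∙ v) ⊓ D = ⊥ :=
    (isOrtho_iff_le.2 ((span_singleton_le_iff_mem v _).2 hvD)).disjoint.eq_bot
  have := finrank_sup_add_finrank_inf_eq (𝕜 ∙ v) D
  rw [hdisj, finrank_bot, finrank_span_singleton hv] at this
  omega

theorem finrank_tilt (hu : u ∈ K) (hu0 : u ≠ 0) (hw : w ∈ Kᗮ) (t : 𝕜) :
    finrank 𝕜 (K.tilt u w t) = finrank 𝕜 K := by
  conv_rhs => rw [← tilt_zero (w := w) hu]
  rw [tilt, tilt, finrank_span_singleton_sup_of_mem_orthogonal (add_smul_ne_zero hu hu0 hw t)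
    (add_smul_mem_orthogonal_inf hw t), finrank_span_singleton_sup_of_mem_orthogonal
    (add_smul_ne_zero hu hu0 hw 0) (add_smul_mem_orthogonal_inf hw 0)]

theorem starProjection_tilt (hw : w ∈ Kᗮ) (t : 𝕜) :
    (K.tilt u w t).starProjection =
      (𝕜 ∙ (u + t • w)).starProjection + ((𝕜 ∙ u)ᗮ ⊓ K).starProjection :=
  IsOrtho.starProjection_sup <| isOrtho_iff_le.2 <|
    (span_singleton_le_iff_mem _ _).2 (add_smul_mem_orthogonal_inf hw t)

theorem continuousAt_starProjection_tilt (hu0 : u ≠ 0) (hw : w ∈ Kᗮ) :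
    ContinuousAt (fun t : 𝕜 => (K.tilt u w t).starProjection) 0 := by
  simp_rw [starProjection_tilt hw]
  refine ContinuousAt.add ?_ continuousAt_const
  refine ContinuousAt.comp (g := fun v : E => (𝕜 ∙ v).starProjection) ?_ (by fun_prop)
  simpa using continuousAt_starProjection_span_singleton hu0

end Submodule

section Configurations

variable {n k h : ℕ}

local notation "E" => EuclideanSpace ℂ (Fin n)

theorem isInducing_starProjection :
    IsInducing fun K : Submodule ℂ E => K.starProjection :=
  ⟨rfl⟩

theorem continuous_sum_starProjection :
    Continuous fun x : GrassTuple n k h => ∑ j, (x.1 j).starProjection :=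
  continuous_finsetSum _ fun j _ =>
    isInducing_starProjection.continuous.comp ((continuous_apply j).comp continuous_subtype_val)

theorem sumDim_eq_finrank_range (x : GrassTuple n k h) :
    sumDim x = finrank ℂ (LinearMap.range
      ((∑ j, (x.1 j).starProjection : E →L[ℂ] E) : E →ₗ[ℂ] E)) := by
  rw [range_sum_starProjection, sumDim]

theorem isClosed_setOf_sumDim_le (i : ℕ) : IsClosed {x : GrassTuple n k h | sumDim x ≤ i} := by
  have hopen : IsOpen {x : GrassTuple n k h | i + 1 ≤ sumDim x} := by
    convert (isOpen_setOfPred_nat_le_rank (𝕜 := ℂ) (i + 1)).preimage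
      (continuous_sum_starProjection (n := n) (k := k) (h := h)) using 1
    ext x
    simp only [Set.mem_preimage, Set.mem_ofPred_eq, LinearMap.rank, ← finrank_eq_rank,
      Nat.cast_le, sumDim_eq_finrank_range x]
  simpa only [Set.compl_ofPred, not_le, Nat.lt_succ_iff] using hopen.isClosed_compl

theorem lt_sumDim (hh : 2 ≤ h) (x : GrassTuple n k h) : k < sumDim x := by
  by_contra! hle
  have hsup : ∀ j, x.1 j = ⨆ j, x.1 j := fun j =>
    eq_of_le_of_finrank_le (le_iSup x.1 j) (by rw [x.2.2 j]; exact hle)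
  have h01 : (⟨0, by omega⟩ : Fin h) ≠ ⟨1, by omega⟩ := by simp
  exact h01 (x.2.1 ((hsup _).trans (hsup _).symm))

theorem exists_ne_zero_mem_iSup_ne_of_sumDim_lt (x : GrassTuple n k h) (hhk : sumDim x < h * k) :
    ∃ a, ∃ u ∈ x.1 a, u ∈ ⨆ b, ⨆ (_ : b ≠ a), x.1 b ∧ u ≠ 0 := by
  have hdep : ¬iSupIndep x.1 := fun hind => by
    have := hind.finrank_iSup
    simp only [x.2.2, Finset.sum_const, Finset.card_univ, Fintype.card_fin, smul_eq_mul] at this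
    exact hhk.ne this
  simpa [iSupIndep, disjoint_def] using hdep

theorem exists_ne_zero_mem_orthogonal_of_sumDim_lt (x : GrassTuple n k h) (hn : sumDim x < n) :
    ∃ w ∈ (⨆ j, x.1 j)ᗮ, w ≠ 0 := by
  refine exists_mem_ne_zero_of_ne_bot fun hbot => hn.ne ?_
  rw [orthogonal_eq_bot_iff] at hbot
  rw [sumDim, hbot, finrank_top, finrank_euclideanSpace_fin]

theorem mem_closure_setOf_sumDim_succ (x : GrassTuple n k h) (hhk : sumDim x < h * k)
    (hn : sumDim x < n) : x ∈ closure {y : GrassTuple n k h | sumDim y = sumDim x + 1} := by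
  classical
  obtain ⟨a, u, hua, huW, hu0⟩ := exists_ne_zero_mem_iSup_ne_of_sumDim_lt x hhk
  obtain ⟨w, hwV, hw0⟩ := exists_ne_zero_mem_orthogonal_of_sumDim_lt x hn
  have hwa : w ∈ (x.1 a)ᗮ := orthogonal_le (le_iSup x.1 a) hwV
  have hne : ∀ t : ℂ, ∀ b ≠ a, (x.1 a).tilt u w t ≠ x.1 b := by
    intro t b hb heq
    rcases eq_or_ne t 0 with rfl | ht
    · exact x.2.1.ne hb.symm (by rwa [tilt_zero hua] at heq)
    · exact tilt_not_le (le_iSup x.1 a hua) hwV hw0 ht (heq.le.trans (le_iSup x.1 b))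
  let Y : ℂ → GrassTuple n k h := fun t =>
    ⟨update x.1 a ((x.1 a).tilt u w t), x.2.1.update_of_forall_ne (hne t),
      (forall_update_iff _ fun _ (K : Submodule ℂ E) => finrank ℂ K = k).2
        ⟨(finrank_tilt hua hu0 hwa t).trans (x.2.2 a), fun j _ => x.2.2 j⟩⟩
  have htilt : Tendsto (fun t : ℂ => (x.1 a).tilt u w t) (𝓝 0) (𝓝 (x.1 a)) := by
    have hcont := continuousAt_starProjection_tilt (K := x.1 a) hu0 hwa
    rw [ContinuousAt, tilt_zero hua] at hcont
    exact isInducing_starProjection.tendsto_nhds_iff.2 hcont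
  have hY : Tendsto Y (𝓝[≠] 0) (𝓝 x) := by
    refine tendsto_subtype_rng.2 ?_
    rw [← update_eq_self a x.1]
    exact tendsto_const_nhds.update a (htilt.mono_left nhdsWithin_le_nhds)
  have hYdim : ∀ t ≠ (0 : ℂ), sumDim (Y t) = sumDim x + 1 := fun t ht => by
    rw [sumDim, iSup_update_tilt hua huW ht, sup_comm,
      finrank_span_singleton_sup_of_mem_orthogonal hw0 hwV, sumDim]
  exact mem_closure_of_tendsto hY (eventually_mem_nhdsWithin.mono hYdim)

theorem mem_closure_setOf_sumDim_eq {i : ℕ} (hhk : i ≤ h * k) (hn : i ≤ n)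
    {x : GrassTuple n k h} (hx : sumDim x ≤ i) :
    x ∈ closure {y : GrassTuple n k h | sumDim y = i} := by
  induction i generalizing x with
  | zero => exact subset_closure (Nat.le_zero.1 hx)
  | succ i ih =>
    rcases hx.lt_or_eq with hx | hx
    · have hstep : {y : GrassTuple n k h | sumDim y = i} ⊆ closure {y | sumDim y = i + 1} :=
        fun y (hy : sumDim y = i) => by
          simpa [hy] using mem_closure_setOf_sumDim_succ y (by omega) (by omega)
      exact closure_minimal hstep isClosed_closure (ih (by omega) (by omega) (by omega))
    · exact subset_closure hx

end Configurations

theorem grassConfig_closure_general (n k h i : ℕ) (hk : 0 < k) (hh : 2 ≤ h)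
    (hi : i ≤ min (h * k) n) :
    closure {x : GrassTuple n k h | sumDim x = i} =
      {x : GrassTuple n k h | 2 ≤ sumDim x ∧ sumDim x ≤ i} ∧
    ∀ x : GrassTuple n k h, sumDim x = i - 1 →
      x ∈ closure {y : GrassTuple n k h | sumDim y = i} := by
  have hle : ∀ x : GrassTuple n k h, sumDim x ≤ i → x ∈ closure {y | sumDim y = i} :=
    fun x => mem_closure_setOf_sumDim_eq (hi.trans (min_le_left _ _)) (hi.trans (min_le_right _ _))
  refine ⟨subset_antisymm (fun x hx => ⟨?_, ?_⟩) (fun x hx => hle x hx.2),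
    fun x hx => hle x (by omega)⟩
  · have := lt_sumDim hh x
    omega
  · exact closure_minimal (fun y hy => le_of_eq hy) (isClosed_setOf_sumDim_le i) hx

/-- For `h ≥ 2` and `k + 1 ≤ i ≤ min(hk,n)`, the adjacency of strata holds: inside the
ordered configuration space `F_h(Gr(k,n))` of `h` distinct `k`-subspaces of `ℂ^n`, the
closure of the stratum `F_h^i(k,n)` is the union of the strata `F_h^j(k,n)` for
`2 ≤ j ≤ i`; in particular every point of `F_h^{i-1}(k,n)` is a limit of points of
`F_h^i(k,n)`. -/
theorem grassConfig_closure (n k h i : ℕ) (hk : 0 < k) (hkn : k < n) (hh : 2 ≤ h)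
    (hik : k + 1 ≤ i) (hi : i ≤ min (h * k) n) :
    closure {x : GrassTuple n k h | sumDim x = i} =
      {x : GrassTuple n k h | 2 ≤ sumDim x ∧ sumDim x ≤ i} ∧
    ∀ x : GrassTuple n k h, sumDim x = i - 1 →
      x ∈ closure {y : GrassTuple n k h | sumDim y = i} :=
  grassConfig_closure_general n k h i hk hh hi
end
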